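/- arXiv:1706.04928 — 6 statements merged into one kernel-verified Lean document; each statement's English description precedes it below -/
import Mathlib

section
/- Let s > 0 be real, k a positive integer, and x an integer with x ≥ k. Then ∑_{m ≥ x} 1/m^{1+s} ≤ (ζ(1+s) − ∑_{m=1}^{k−1} 1/m^{1+s}) · (Γ(k+s)·Γ(x)) / (Γ(k)·Γ(x+s)). -/
/-!
With `zetaTail s a = ∑_{m ≥ 0} (m + a)^{-(1+s)}`, the bracket on the right is `zetaTail s k`, so
the claim says that `zetaTail s n · Γ(n+s)/Γ(n)` decreases along the integers `n ≥ 1`. As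
`Γ(n+1+s)/Γ(n+1) = (n+s)/n · Γ(n+s)/Γ(n)` and `zetaTail s n = n^{-(1+s)} + zetaTail s (n+1)`,
one step amounts to `s · zetaTail s (n+1) ≤ n^{-s}`. That bound follows by summing the tangent
line inequality `s (m+1)^{-(1+s)} ≤ m^{-s} - (m+1)^{-s}` of the convex function `t ↦ t^{-s}`,
which telescopes.
-/

open Real Finset

theorem one_add_mul_one_sub_le_rpow_neg {s r : ℝ} (hs : 0 ≤ s) (hr : 0 < r) :
    1 + s * (1 - r) ≤ r ^ (-s) := by
  have bernoulli : 1 + (1 + s) * (r⁻¹ - 1) ≤ (1 + (r⁻¹ - 1)) ^ (1 + s) :=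
    one_add_mul_self_le_rpow_one_add (by linarith [inv_pos.2 hr]) (by linarith)
  rw [add_sub_cancel, inv_rpow hr.le, ← rpow_neg hr.le] at bernoulli
  calc 1 + s * (1 - r) = r * (1 + (1 + s) * (r⁻¹ - 1)) := by field_simp; ring
    _ ≤ r * r ^ (-(1 + s)) := mul_le_mul_of_nonneg_left bernoulli hr.le
    _ = r ^ (-s) := by rw [mul_comm, ← rpow_add_one hr.ne']; ring_nf

theorem mul_sub_mul_rpow_neg_le_rpow_neg_sub {s a b : ℝ} (hs : 0 ≤ s) (ha : 0 < a) (hb : 0 < b) :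
    s * (b - a) * b ^ (-(1 + s)) ≤ a ^ (-s) - b ^ (-s) := by
  have key := mul_le_mul_of_nonneg_left (one_add_mul_one_sub_le_rpow_neg hs (div_pos ha hb))
    (rpow_nonneg hb.le (-s))
  rw [div_rpow ha.le hb.le, mul_div_cancel₀ _ (rpow_pos_of_pos hb _).ne'] at key
  have hb' : b ^ (-(1 + s)) = b ^ (-s) / b := by
    rw [show -(1 + s) = -s - 1 by ring, rpow_sub hb, rpow_one]
  rw [hb']
  field_simp at key ⊢
  linarith

theorem summable_one_div_nat_add_rpow_of_pos {a p : ℝ} (ha : 0 < a) (hp : 1 < p) :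
    Summable fun m : ℕ => 1 / ((m : ℝ) + a) ^ p :=
  ((Real.summable_one_div_nat_add_rpow a p).2 hp).congr fun m => by
    rw [abs_of_pos (by positivity)]

noncomputable def zetaTail (s a : ℝ) : ℝ := ∑' m : ℕ, 1 / ((m : ℝ) + a) ^ (1 + s)

section zetaTail

variable {s a : ℝ}

theorem zetaTail_eq_add (hs : 0 < s) (ha : 0 < a) :
    zetaTail s a = 1 / a ^ (1 + s) + zetaTail s (a + 1) := by
  rw [zetaTail, (summable_one_div_nat_add_rpow_of_pos ha (by linarith)).tsum_eq_zero_add,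
    zetaTail]
  push_cast
  simp only [zero_add, add_right_comm _ (1 : ℝ) a, add_assoc]

theorem mul_zetaTail_add_one_le (hs : 0 ≤ s) (ha : 0 < a) :
    s * zetaTail s (a + 1) ≤ a ^ (-s) := by
  rw [zetaTail, ← tsum_mul_left]
  refine Real.tsum_le_of_sum_range_le (fun m => by positivity) fun N => ?_
  have term (i : ℕ) : s * (1 / ((i : ℝ) + (a + 1)) ^ (1 + s)) ≤
      ((i : ℝ) + a) ^ (-s) - (((i + 1 : ℕ) : ℝ) + a) ^ (-s) := by
    have := mul_sub_mul_rpow_neg_le_rpow_neg_sub hs (a := i + a) (b := i + a + 1)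
      (by positivity) (by positivity)
    rw [rpow_neg (by positivity), ← one_div] at this
    push_cast
    simpa [add_assoc, add_comm a 1] using this
  calc ∑ i ∈ range N, s * (1 / ((i : ℝ) + (a + 1)) ^ (1 + s))
      ≤ ∑ i ∈ range N, (((i : ℝ) + a) ^ (-s) - (((i + 1 : ℕ) : ℝ) + a) ^ (-s)) :=
        sum_le_sum fun i _ => term i
    _ = a ^ (-s) - ((N : ℝ) + a) ^ (-s) := by
        rw [sum_range_sub' (fun i : ℕ => ((i : ℝ) + a) ^ (-s))]; simp
    _ ≤ a ^ (-s) := sub_le_self _ (by positivity)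

theorem add_mul_zetaTail_add_one_le (hs : 0 < s) (ha : 0 < a) :
    (a + s) * zetaTail s (a + 1) ≤ a * zetaTail s a := by
  have head : a * (1 / a ^ (1 + s)) = a ^ (-s) := by
    rw [rpow_neg ha.le, rpow_one_add' ha.le (by linarith)]; field_simp
  rw [zetaTail_eq_add hs ha, mul_add, head]
  linarith [mul_zetaTail_add_one_le hs.le ha]

theorem zetaTail_add_one_mul_Gamma_div_Gamma_le (hs : 0 < s) (ha : 0 < a) :
    zetaTail s (a + 1) * Gamma (a + 1 + s) / Gamma (a + 1) ≤
      zetaTail s a * Gamma (a + s) / Gamma a := by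
  have hΓ : 0 < Gamma a := Gamma_pos_of_pos ha
  rw [add_right_comm, Gamma_add_one (by positivity), Gamma_add_one ha.ne',
    div_le_div_iff₀ (by positivity) hΓ]
  calc zetaTail s (a + 1) * ((a + s) * Gamma (a + s)) * Gamma a
      = (a + s) * zetaTail s (a + 1) * (Gamma (a + s) * Gamma a) := by ring
    _ ≤ a * zetaTail s a * (Gamma (a + s) * Gamma a) :=
        mul_le_mul_of_nonneg_right (add_mul_zetaTail_add_one_le hs ha)
          (mul_nonneg (Gamma_pos_of_pos (by positivity)).le hΓ.le)
    _ = zetaTail s a * Gamma (a + s) * (a * Gamma a) := by ring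

theorem antitoneOn_zetaTail_mul_Gamma_div_Gamma (hs : 0 < s) :
    AntitoneOn (fun n : ℕ => zetaTail s n * Gamma (n + s) / Gamma n) {n | 1 ≤ n} :=
  antitoneOn_nat_Ici_of_succ_le fun n hn => by
    simpa using zetaTail_add_one_mul_Gamma_div_Gamma_le hs (a := n) (by exact_mod_cast hn)

theorem sum_range_add_zetaTail_eq_zetaTail_one (hs : 0 < s) (j : ℕ) :
    ∑ i ∈ range j, 1 / ((i : ℝ) + 1) ^ (1 + s) + zetaTail s (j + 1) = zetaTail s 1 := by
  rw [zetaTail, zetaTail, ← (summable_one_div_nat_add_rpow_of_pos one_pos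
    (by linarith : 1 < 1 + s)).sum_add_tsum_nat_add j]
  push_cast
  simp only [add_assoc]

theorem zetaTail_one_sub_sum_Icc (hs : 0 < s) {k : ℕ} (hk : 1 ≤ k) :
    zetaTail s 1 - ∑ m ∈ Icc 1 (k - 1), 1 / (m : ℝ) ^ (1 + s) = zetaTail s k := by
  obtain ⟨j, rfl⟩ := Nat.exists_eq_add_of_le' hk
  rw [← sum_range_add_zetaTail_eq_zetaTail_one hs j, Nat.add_sub_cancel,
    ← Ico_add_one_right_eq_Icc, sum_Ico_eq_sum_range, Nat.add_sub_cancel]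
  simp only [Nat.cast_add, Nat.cast_one, add_comm (1 : ℝ), add_sub_cancel_left]

end zetaTail

/-- For real `s > 0`, positive integer `k` and integer `x ≥ k`,
`∑_{m ≥ x} 1/m^{1+s} ≤ (ζ(1+s) − ∑_{m=1}^{k−1} 1/m^{1+s}) · Γ(k+s)Γ(x)/(Γ(k)Γ(x+s))`,
where `ζ(1+s) = ∑_{m ≥ 1} 1/m^{1+s}`. -/
theorem stmt_3 (s : ℝ) (hs : 0 < s) (k x : ℕ) (hk : 1 ≤ k) (hx : k ≤ x) :
    (∑' m : ℕ, (1 : ℝ) / ((m : ℝ) + x) ^ (1 + s)) ≤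
      ((∑' m : ℕ, (1 : ℝ) / ((m : ℝ) + 1) ^ (1 + s))
          - ∑ m ∈ Finset.Icc 1 (k - 1), (1 : ℝ) / (m : ℝ) ^ (1 + s))
        * (Real.Gamma ((k : ℝ) + s) * Real.Gamma (x : ℝ))
        / (Real.Gamma (k : ℝ) * Real.Gamma ((x : ℝ) + s)) := by
  change zetaTail s x ≤ (zetaTail s 1 - _) * _ / _
  have hk' : (0 : ℝ) < k := by exact_mod_cast hk
  have hx' : (0 : ℝ) < x := hk'.trans_le (by exact_mod_cast hx)
  have decreasing := antitoneOn_zetaTail_mul_Gamma_div_Gamma hs hk (hk.trans hx) hx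
  rw [zetaTail_one_sub_sum_Icc hs hk, le_div_iff₀ (by positivity)]
  rw [div_le_div_iff₀ (Gamma_pos_of_pos hx') (Gamma_pos_of_pos hk')] at decreasing
  linarith
end

section
/- Let s > 0 be real, x a positive integer, and A a real number. If ∑_{m ≥ x} 1/m^{1+s} ≤ A·Γ(x)/(s·Γ(x+s)), then ∑_{m ≥ x+1} 1/m^{1+s} ≤ A·Γ(x+1)/(s·Γ(x+1+s)). -/
/-!
Since `Γ(x + 1) / Γ(x + 1 + s) = x / (x + s) · Γ(x) / Γ(x + s)` and the sum from `x` is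
`x^{-1-s} + T` with `T` the sum from `x + 1`, it suffices that `T ≤ (x^{-1-s} + T) · x / (x + s)`,
i.e. `s T ≤ x^{-s}`. By the mean value theorem each term `s (m + x + 1)^{-1-s}` is at most the
difference `(m + x)^{-s} - (m + x + 1)^{-s}`, and these telescope to `x^{-s}`.
-/

open Filter Topology

theorem Antitone.hasSum_sub_succ {f : ℕ → ℝ} {l : ℝ} (hf : Antitone f)
    (hl : Tendsto f atTop (𝓝 l)) : HasSum (fun n ↦ f n - f (n + 1)) (f 0 - l) := by
  rw [hasSum_iff_tendsto_nat_of_nonneg fun n ↦ sub_nonneg.2 (hf n.le_succ)]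
  simp_rw [Finset.sum_range_sub']
  exact tendsto_const_nhds.sub hl

theorem Real.mul_add_one_rpow_neg_le_rpow_neg_sub {s y : ℝ} (hs : 0 ≤ s) (hy : 0 < y) :
    s * (y + 1) ^ (-(1 + s)) ≤ y ^ (-s) - (y + 1) ^ (-s) := by
  have hpos : ∀ t ∈ Set.Icc y (y + 1), t ≠ 0 := fun t ht ↦ (hy.trans_le ht.1).ne'
  obtain ⟨c, hc, hslope⟩ := exists_hasDerivAt_eq_slope (fun t ↦ t ^ (-s))
    (fun t ↦ -s * t ^ (-s - 1)) (lt_add_one y)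
    (continuousOn_id.rpow_const fun t ht ↦ .inl (hpos t ht))
    fun t ht ↦ Real.hasDerivAt_rpow_const (.inl (hpos t (Set.Ioo_subset_Icc_self ht)))
  have hmono : (y + 1) ^ (-s - 1) ≤ c ^ (-s - 1) :=
    Real.rpow_le_rpow_of_nonpos (hy.trans hc.1) hc.2.le (by linarith)
  rw [add_sub_cancel_left, div_one] at hslope
  rw [show -(1 + s) = -s - 1 by ring]
  nlinarith

section ZetaTail

variable {s y : ℝ}

theorem mul_one_div_add_succ_rpow_le_sub (hs : 0 ≤ s) (hy : 0 < y) (m : ℕ) :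
    s * (1 / ((m : ℝ) + (y + 1)) ^ (1 + s)) ≤
      ((m : ℝ) + y) ^ (-s) - ((↑(m + 1) : ℝ) + y) ^ (-s) := by
  have hmy : 0 < (m : ℝ) + y := by positivity
  have := Real.mul_add_one_rpow_neg_le_rpow_neg_sub hs hmy
  rw [Real.rpow_neg (by positivity), ← one_div] at this
  rwa [Nat.cast_succ, add_right_comm, ← add_assoc]

theorem hasSum_rpow_neg_sub_succ (hs : 0 < s) (hy : 0 < y) :
    HasSum (fun m : ℕ ↦ ((m : ℝ) + y) ^ (-s) - ((↑(m + 1) : ℝ) + y) ^ (-s)) (y ^ (-s)) := by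
  have hanti : Antitone fun m : ℕ ↦ ((m : ℝ) + y) ^ (-s) := fun m n hmn ↦
    Real.rpow_le_rpow_of_nonpos (by positivity) (by gcongr) (by linarith)
  have hlim : Tendsto (fun m : ℕ ↦ ((m : ℝ) + y) ^ (-s)) atTop (𝓝 0) :=
    (tendsto_rpow_neg_atTop hs).comp (tendsto_atTop_add_const_right _ _ tendsto_natCast_atTop_atTop)
  simpa using hanti.hasSum_sub_succ hlim

theorem summable_one_div_add_succ_rpow (hs : 0 < s) (hy : 0 < y) :
    Summable fun m : ℕ ↦ 1 / ((m : ℝ) + (y + 1)) ^ (1 + s) :=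
  (summable_mul_left_iff hs.ne').1 <|
    (hasSum_rpow_neg_sub_succ hs hy).summable.of_nonneg_of_le (fun _ ↦ by positivity)
      (mul_one_div_add_succ_rpow_le_sub hs.le hy)

theorem mul_tsum_one_div_add_succ_rpow_le (hs : 0 < s) (hy : 0 < y) :
    s * ∑' m : ℕ, 1 / ((m : ℝ) + (y + 1)) ^ (1 + s) ≤ y ^ (-s) :=
  hasSum_le (mul_one_div_add_succ_rpow_le_sub hs.le hy)
    ((summable_one_div_add_succ_rpow hs hy).hasSum.mul_left s) (hasSum_rpow_neg_sub_succ hs hy)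

theorem tsum_one_div_add_rpow_eq (hs : 0 < s) (hy : 0 < y) :
    ∑' m : ℕ, 1 / ((m : ℝ) + y) ^ (1 + s) =
      1 / y ^ (1 + s) + ∑' m : ℕ, 1 / ((m : ℝ) + (y + 1)) ^ (1 + s) := by
  have hshift : ∀ m : ℕ, ((↑(m + 1) : ℝ) + y) = (m : ℝ) + (y + 1) := fun m ↦ by push_cast; ring
  have hsum : Summable fun m : ℕ ↦ 1 / ((m : ℝ) + y) ^ (1 + s) :=
    (summable_nat_add_iff 1).1 <| by simpa only [hshift] using summable_one_div_add_succ_rpow hs hy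
  rw [hsum.tsum_eq_zero_add]
  simp only [hshift, Nat.cast_zero, zero_add]

theorem le_one_div_rpow_add_mul_div (hs : 0 < s) (hy : 0 < y) {T : ℝ} (hT : s * T ≤ y ^ (-s)) :
    T ≤ (1 / y ^ (1 + s) + T) * (y / (y + s)) := by
  have hys : 0 < y + s := by linarith
  have hy1s : 1 / y ^ (1 + s) * y = y ^ (-s) := by
    rw [Real.rpow_one_add' hy.le (by linarith), Real.rpow_neg hy.le]
    field_simp
  rw [mul_div_assoc', le_div_iff₀ hys]
  nlinarith

end ZetaTail

/-- For real `s > 0`, positive integer `x`, real `A`: if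
`∑_{m ≥ x} 1/m^{1+s} ≤ A·Γ(x)/(s·Γ(x+s))` then
`∑_{m ≥ x+1} 1/m^{1+s} ≤ A·Γ(x+1)/(s·Γ(x+1+s))`. -/
theorem stmt_4 (s : ℝ) (hs : 0 < s) (x : ℕ) (hx : 1 ≤ x) (A : ℝ)
    (h : (∑' m : ℕ, (1 : ℝ) / ((m : ℝ) + x) ^ (1 + s)) ≤
      A * Real.Gamma (x : ℝ) / (s * Real.Gamma ((x : ℝ) + s))) :
    (∑' m : ℕ, (1 : ℝ) / ((m : ℝ) + (x + 1)) ^ (1 + s)) ≤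
      A * Real.Gamma ((x : ℝ) + 1) / (s * Real.Gamma ((x : ℝ) + 1 + s)) := by
  have hx0 : (0 : ℝ) < x := by exact_mod_cast hx
  have hxs : (0 : ℝ) < x + s := by positivity
  rw [tsum_one_div_add_rpow_eq hs hx0] at h
  have hgamma : A * Real.Gamma ((x : ℝ) + 1) / (s * Real.Gamma ((x : ℝ) + 1 + s)) =
      A * Real.Gamma x / (s * Real.Gamma (x + s)) * (x / (x + s)) := by
    rw [Real.Gamma_add_one hx0.ne', add_right_comm, Real.Gamma_add_one hxs.ne']
    field_simp
  rw [hgamma]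
  exact (le_one_div_rpow_add_mul_div hs hx0 (mul_tsum_one_div_add_succ_rpow_le hs hx0)).trans
    (mul_le_mul_of_nonneg_right h (by positivity))
end

section
/- Let s > 0 be real and let q ≥ 1, a ≥ 1, and 0 ≤ b < q be integers, and set m = a·q + b. Then f(s;m,q) = s^{−m/q}·g(s, b/q), where m/q denotes real division. -/
/-- `[m/q]_p = ⌊(m−p−1)/q⌋ + 1`. -/
def dilutedLen (m q p : ℕ) : ℕ := (m - p - 1) / q + 1

/-- `f(s;m,q) = (1/q)·∑_{p=0}^{q−1} s^{−[m/q]_p}`. -/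
noncomputable def fFG (s : ℝ) (m q : ℕ) : ℝ :=
  (1 / (q : ℝ)) * ∑ p ∈ Finset.range q, (s ^ dilutedLen m q p)⁻¹

/-- `g(s,x) = s^x·(x·s^{−1} + 1 − x)`. -/
noncomputable def gFG (s x : ℝ) : ℝ := s ^ x * (x * s⁻¹ + 1 - x)

/-! Writing `m = a q + b`, the block lengths `[m/q]_p` equal `a + 1` for the `b` indices `p < b`
and `a` for the remaining `q - b`, so `f(s;m,q)` is the average `(b s^{-(a+1)} + (q-b) s^{-a}) / q`.
Factoring out `s^{-a} = s^{-m/q} s^{b/q}` leaves exactly `g(s, b/q)`. -/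

lemma dilutedLen_of_lt {a q b p : ℕ} (hb : b ≤ q) (hp : p < b) :
    dilutedLen (a * q + b) q p = a + 1 := by
  have hdiv : (a * q + b - p - 1) / q = a := by
    apply Nat.div_eq_of_lt_le
    · omega
    · rw [add_one_mul]
      omega
  rw [dilutedLen, hdiv]

lemma dilutedLen_of_le {a q b p : ℕ} (ha : 1 ≤ a) (hbp : b ≤ p) (hpq : p < q) :
    dilutedLen (a * q + b) q p = a := by
  obtain ⟨c, rfl⟩ := Nat.exists_eq_add_of_le' ha
  have hdiv : ((c + 1) * q + b - p - 1) / q = c := by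
    rw [add_one_mul]
    apply Nat.div_eq_of_lt_le
    · omega
    · rw [add_one_mul]
      omega
  rw [dilutedLen, hdiv]

lemma fFG_mul_add {a q b : ℕ} (s : ℝ) (ha : 1 ≤ a) (hb : b ≤ q) :
    fFG s (a * q + b) q = (b * (s ^ (a + 1))⁻¹ + (q - b : ℕ) * (s ^ a)⁻¹) / q := by
  have hlow : ∑ p ∈ Finset.range b, (s ^ dilutedLen (a * q + b) q p)⁻¹ = b * (s ^ (a + 1))⁻¹ := by
    rw [Finset.sum_congr rfl fun p hp => by rw [dilutedLen_of_lt hb (Finset.mem_range.mp hp)]]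
    simp
  have hhigh : ∑ p ∈ Finset.Ico b q, (s ^ dilutedLen (a * q + b) q p)⁻¹
      = (q - b : ℕ) * (s ^ a)⁻¹ := by
    rw [Finset.sum_congr rfl fun p hp => by
      rw [dilutedLen_of_le ha (Finset.mem_Ico.mp hp).1 (Finset.mem_Ico.mp hp).2]]
    simp
  rw [fFG, ← Finset.sum_range_add_sum_Ico _ hb, hlow, hhigh]
  ring

lemma rpow_neg_div_mul_gFG {s : ℝ} (hs : 0 < s) {a q b : ℕ} (hq : q ≠ 0) :
    s ^ (-(((a * q + b : ℕ) : ℝ) / q)) * gFG s ((b : ℝ) / q)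
      = (s ^ a)⁻¹ * ((b : ℝ) / q * s⁻¹ + 1 - (b : ℝ) / q) := by
  have hexp : -(((a * q + b : ℕ) : ℝ) / q) = -(a : ℝ) + -((b : ℝ) / q) := by
    push_cast
    field_simp
    ring
  have hpow : s ^ ((b : ℝ) / q) ≠ 0 := by positivity
  rw [gFG, hexp, Real.rpow_add hs, Real.rpow_neg hs.le, Real.rpow_neg hs.le, Real.rpow_natCast]
  field_simp

theorem stmt_10_general (s : ℝ) (hs : 0 < s) (q a b : ℕ) (ha : 1 ≤ a) (hb : b < q)
    (m : ℕ) (hm : m = a * q + b) :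
    fFG s m q = s ^ (-((m : ℝ) / q)) * gFG s ((b : ℝ) / q) := by
  subst hm
  have hq : (q : ℝ) ≠ 0 := by exact_mod_cast (hb.trans_le' b.zero_le).ne'
  rw [fFG_mul_add s ha hb.le, rpow_neg_div_mul_gFG hs (by omega), Nat.cast_sub hb.le]
  field_simp
  ring

/-- For real `s > 0` and integers `q ≥ 1`, `a ≥ 1`, `0 ≤ b < q` with `m = a·q + b`,
one has `f(s;m,q) = s^{−m/q}·g(s, b/q)`, where `m/q` denotes real division. -/
theorem stmt_10 (s : ℝ) (hs : 0 < s) (q a b : ℕ) (hq : 1 ≤ q) (ha : 1 ≤ a) (hb : b < q)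
    (m : ℕ) (hm : m = a * q + b) :
    fFG s m q = s ^ (-((m : ℝ) / q)) * gFG s ((b : ℝ) / q) :=
  stmt_10_general s hs q a b ha hb m hm
end

section
/- Let s > 1 be real. For every x ∈ [0,1], one has g(s,x) ≤ g*(s), with equality when x = x*(s) := 1 + 1/(s−1) − 1/ln s. -/
/-- `x*(s) = 1 + 1/(s−1) − 1/ln s`. -/
noncomputable def xStar (s : ℝ) : ℝ := 1 + 1 / (s - 1) - 1 / Real.log s

/-- `g*(s) = ((s−1)/ln s)·exp(ln s/(s−1) − 1)`. -/
noncomputable def gStar (s : ℝ) : ℝ :=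
  ((s - 1) / Real.log s) * Real.exp (Real.log s / (s - 1) - 1)

/-!
With `t = ln s · (x − x*(s))` one has `g(s,x) = g*(s) · (1 − t) eᵗ`, and `(1 − t) eᵗ ≤ 1`
with equality at `t = 0`, because `1 − t ≤ e⁻ᵗ`.
-/

open Real

lemma one_sub_mul_exp_le_one (t : ℝ) : (1 - t) * exp t ≤ 1 := by
  calc (1 - t) * exp t ≤ exp (-t) * exp t := by
        gcongr
        linarith [add_one_le_exp (-t)]
    _ = 1 := by rw [← exp_add, neg_add_cancel, exp_zero]

lemma gFG_eq_exp_mul {s : ℝ} (hs : 0 < s) (x : ℝ) :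
    gFG s x = exp (log s * x) * (1 - (s - 1) / s * x) := by
  rw [gFG, rpow_def_of_pos hs]
  field_simp
  ring

lemma gStar_pos {s : ℝ} (hs : 1 < s) : 0 < gStar s := by
  have : 0 < log s := log_pos hs
  have : 0 < s - 1 := sub_pos.mpr hs
  unfold gStar
  positivity

lemma gFG_eq_gStar_mul {s : ℝ} (hs : 1 < s) (x : ℝ) :
    gFG s x = gStar s * ((1 - log s * (x - xStar s)) * exp (log s * (x - xStar s))) := by
  have hs0 : 0 < s := by linarith
  have hL : log s ≠ 0 := (log_pos hs).ne'
  have hs1 : s - 1 ≠ 0 := (sub_pos.mpr hs).ne'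
  have hexponent : log s * x = log s * (x - xStar s) + (log s / (s - 1) - 1) + log s := by
    unfold xStar
    field_simp
    ring
  rw [gFG_eq_exp_mul hs0, hexponent, exp_add, exp_add, exp_log hs0, gStar, xStar]
  field_simp
  ring

lemma gFG_le_gStar {s : ℝ} (hs : 1 < s) (x : ℝ) : gFG s x ≤ gStar s := by
  rw [gFG_eq_gStar_mul hs]
  exact mul_le_of_le_one_right (gStar_pos hs).le (one_sub_mul_exp_le_one _)

/-- For real `s > 1`, `g(s,x) ≤ g*(s)` for every `x ∈ [0,1]`,
with equality when `x = x*(s)`. -/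
theorem stmt_11 (s : ℝ) (hs : 1 < s) :
    (∀ x ∈ Set.Icc (0 : ℝ) 1, gFG s x ≤ gStar s) ∧ gFG s (xStar s) = gStar s := by
  refine ⟨fun x _ => gFG_le_gStar hs x, ?_⟩
  rw [gFG_eq_gStar_mul hs]
  simp
end

section
/- Let s ≥ 2 be real and let q ≥ 1 and m ≥ q be integers. Then f(s;m,q) ≤ (2/e)·((s−1)/ln s)·s^{−m/q}, where m/q denotes real division. -/
open Real Finset

lemma log_le_sub_one_mul_log_two {s : ℝ} (hs : 2 ≤ s) : log s ≤ (s - 1) * log 2 := by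
  have bernoulli : s ≤ 2 ^ (s - 1) := by
    simpa [one_add_one_eq_two] using
      one_add_mul_self_le_rpow_one_add (s := 1) (by norm_num) (p := s - 1) (by linarith)
  calc log s ≤ log (2 ^ (s - 1)) := log_le_log (by linarith) bernoulli
    _ = (s - 1) * log 2 := log_rpow two_pos _

lemma one_sub_mul_mul_exp_le {b c : ℝ} (hb : 0 < b) (hc : 0 < c) (x : ℝ) :
    (1 - c * x) * exp (b * x) ≤ c / b * exp (b / c - 1) := by
  set z := b / c - b * x
  have h1 : 1 - c * x = c / b * z := by simp only [z]; field_simp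
  have h2 : b * x = b / c + -z := by ring
  calc (1 - c * x) * exp (b * x) = c / b * exp (b / c) * (z * exp (-z)) := by
        rw [h1, h2, exp_add]; ring
    _ ≤ c / b * exp (b / c) * exp (-1) := by gcongr; exact mul_exp_neg_le_exp_neg_one z
    _ = c / b * exp (b / c - 1) := by rw [sub_eq_add_neg, exp_add]; ring

lemma one_sub_mul_le_mul_rpow_neg {s : ℝ} (hs : 2 ≤ s) (x : ℝ) :
    1 - (s - 1) / s * x ≤ 2 / exp 1 * ((s - 1) / log s) * s ^ (-x) := by
  have hs0 : 0 < s := by linarith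
  have hs1 : 0 < s - 1 := by linarith
  have hlog : 0 < log s := log_pos (by linarith)
  have hroot : exp (log s / (s - 1)) ≤ 2 := by
    rw [← exp_log two_pos, exp_le_exp, div_le_iff₀ hs1, mul_comm]
    exact log_le_sub_one_mul_log_two hs
  have hexp : exp (log s / ((s - 1) / s) - 1) ≤ 2 * s / exp 1 := by
    have hsplit : log s / ((s - 1) / s) - 1 = log s / (s - 1) + log s - 1 := by field_simp; ring
    rw [hsplit, exp_sub, exp_add, exp_log hs0]
    gcongr
  rw [rpow_neg hs0.le, ← div_eq_mul_inv, le_div_iff₀ (rpow_pos_of_pos hs0 x),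
    rpow_def_of_pos hs0]
  calc (1 - (s - 1) / s * x) * exp (log s * x)
      ≤ (s - 1) / s / log s * exp (log s / ((s - 1) / s) - 1) :=
        one_sub_mul_mul_exp_le hlog (div_pos hs1 hs0) x
    _ ≤ (s - 1) / s / log s * (2 * s / exp 1) := by gcongr
    _ = 2 / exp 1 * ((s - 1) / log s) := by field_simp

lemma dilutedLen_eq {m q p : ℕ} (hpq : p < q) (hqm : q ≤ m) :
    dilutedLen m q p = m / q + if p < m % q then 1 else 0 := by
  have hq : 0 < q := by omega
  have hdiv := Nat.div_add_mod m q
  have hmod := Nat.mod_lt m hq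
  have ha : 0 < m / q := Nat.div_pos hqm hq
  unfold dilutedLen
  split_ifs with h
  · rw [show m - p - 1 = (m % q - p - 1) + q * (m / q) by omega, Nat.add_mul_div_left _ _ hq,
      Nat.div_eq_of_lt (by omega)]
    omega
  · have hsplit : q * (m / q) = q * (m / q - 1) + q := by
      rw [← Nat.mul_add_one, Nat.sub_add_cancel ha]
    rw [show m - p - 1 = (q + m % q - p - 1) + q * (m / q - 1) by omega,
      Nat.add_mul_div_left _ _ hq, Nat.div_eq_of_lt (by omega)]
    omega

lemma sum_range_inv_pow_dilutedLen {q m : ℕ} (hq : 0 < q) (hqm : q ≤ m) (s : ℝ) :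
    ∑ p ∈ range q, (s ^ dilutedLen m q p)⁻¹
      = (m % q : ℕ) * (s ^ (m / q + 1))⁻¹ + (q - m % q : ℕ) * (s ^ (m / q))⁻¹ := by
  have hmod : m % q ≤ q := (Nat.mod_lt m hq).le
  rw [← sum_range_add_sum_Ico _ hmod]
  congr 1
  · rw [sum_congr rfl fun p hp => by
      rw [dilutedLen_eq (by simp at hp; omega) hqm, if_pos (by simpa using hp)]]
    simp
  · rw [sum_congr rfl fun p hp => by
      rw [dilutedLen_eq (by simp at hp; omega) hqm, if_neg (by simp at hp; omega)]]
    simp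

lemma fFG_eq {q m : ℕ} (hq : 0 < q) (hqm : q ≤ m) {s : ℝ} (hs : s ≠ 0) :
    fFG s m q = (1 - (s - 1) / s * ((m % q : ℕ) / q)) * (s ^ (m / q))⁻¹ := by
  have hmod : m % q ≤ q := (Nat.mod_lt m hq).le
  rw [fFG, sum_range_inv_pow_dilutedLen hq hqm, Nat.cast_sub hmod, pow_succ]
  field_simp
  ring

lemma natCast_div_eq_div_add_mod_div (m q : ℕ) :
    (m : ℝ) / q = (m / q : ℕ) + (m % q : ℕ) / q := by
  rcases Nat.eq_zero_or_pos q with rfl | hq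
  · simp
  · field_simp
    exact_mod_cast (Nat.div_add_mod m q).symm

/-- For real `s ≥ 2` and integers `q ≥ 1`, `m ≥ q`,
`f(s;m,q) ≤ (2/e)·((s−1)/ln s)·s^{−m/q}`, with real division `m/q`. -/
theorem stmt_14 (s : ℝ) (hs : 2 ≤ s) (q m : ℕ) (hq : 1 ≤ q) (hm : q ≤ m) :
    fFG s m q ≤ (2 / Real.exp 1) * ((s - 1) / Real.log s) * s ^ (-((m : ℝ) / q)) := by
  have hs0 : 0 < s := by linarith
  rw [fFG_eq hq hm hs0.ne', natCast_div_eq_div_add_mod_div m q, neg_add, rpow_add hs0,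
    rpow_neg hs0.le, rpow_natCast]
  calc (1 - (s - 1) / s * ((m % q : ℕ) / q)) * (s ^ (m / q))⁻¹
      ≤ 2 / exp 1 * ((s - 1) / log s) * s ^ (-((m % q : ℕ) / q : ℝ)) * (s ^ (m / q))⁻¹ :=
        mul_le_mul_of_nonneg_right (one_sub_mul_le_mul_rpow_neg hs _) (by positivity)
    _ = _ := by ring
end

section
/- Let s ≥ 2 and m₀ ≥ 2 be integers, let r : ℕ → ℕ satisfy r(m) = 0 for all m < m₀, and let ρ be a real number such that m·ρ ≥ ln(s²·m²·r(m)) for every m ≥ 1 with r(m) ≥ 1. Then (2s/e)·∑_{m ≥ 1} r(m)·e^{−m·ρ} ≤ 1/(s·m₀). -/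
/-!
The hypothesis on `ρ` says exactly that each nonzero term satisfies
`r(m)·e^{−mρ} ≤ 1/(s²m²)`, so the series is at most `s⁻²·∑_{m ≥ m₀} m⁻²`. The bound
`m⁻² ≤ (m² − ¼)⁻¹ = (m − ½)⁻¹ − (m + ½)⁻¹` telescopes this tail to `(m₀ − ½)⁻¹`, and
`2m₀ ≤ e·(m₀ − ½)` for `m₀ ≥ 2` absorbs the factor `2/e`.
-/

open Real Finset

lemma tsum_le_of_le_sub_succ {f G : ℕ → ℝ} (hf : ∀ k, 0 ≤ f k) (hG : ∀ k, 0 ≤ G k)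
    (h : ∀ k, f k ≤ G k - G (k + 1)) : ∑' k, f k ≤ G 0 :=
  Real.tsum_le_of_sum_range_le hf fun n => calc
    ∑ k ∈ range n, f k ≤ ∑ k ∈ range n, (G k - G (k + 1)) := sum_le_sum fun k _ => h k
    _ = G 0 - G n := sum_range_sub' G n
    _ ≤ G 0 := sub_le_self _ (hG n)

lemma inv_sq_le_inv_sub_half_sub_inv_add_half {x : ℝ} (hx : 1 / 2 < x) :
    (x ^ 2)⁻¹ ≤ (x - 1 / 2)⁻¹ - (x + 1 / 2)⁻¹ := by
  have hx' : 0 < x - 1 / 2 := by linarith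
  rw [inv_sub_inv hx'.ne' (by linarith), show x + 1 / 2 - (x - 1 / 2) = 1 by ring, one_div]
  exact inv_anti₀ (by positivity) (by nlinarith)

lemma tsum_le_mul_inv_sub_half {f : ℕ → ℝ} {c : ℝ} {m₀ : ℕ} (hc : 0 ≤ c) (hm₀ : 1 ≤ m₀)
    (hf : ∀ m, 0 ≤ f m) (hzero : ∀ m < m₀, f m = 0)
    (hle : ∀ m, m₀ ≤ m → f m ≤ c * ((m : ℝ) ^ 2)⁻¹) :
    ∑' m, f m ≤ c * ((m₀ : ℝ) - 1 / 2)⁻¹ := by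
  have hsupp : Function.support f ⊆ Set.range (· + m₀) := fun m hm =>
    ⟨m - m₀, Nat.sub_add_cancel (not_lt.mp fun h => hm (hzero m h))⟩
  rw [← (add_left_injective m₀).tsum_eq hsupp]
  have hx : ∀ k : ℕ, (1 : ℝ) ≤ (k : ℝ) + m₀ := fun k => by
    linarith [k.cast_nonneg (α := ℝ), (Nat.one_le_cast (α := ℝ)).mpr hm₀]
  have := tsum_le_of_le_sub_succ (fun k => hf (k + m₀))
    (G := fun k : ℕ => c * ((k : ℝ) + m₀ - 1 / 2)⁻¹)
    (fun k => mul_nonneg hc (inv_nonneg.mpr (by linarith [hx k]))) fun k => ?_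
  · simpa using this
  calc f (k + m₀) ≤ c * (((k : ℝ) + m₀) ^ 2)⁻¹ := by exact_mod_cast hle (k + m₀) le_add_self
    _ ≤ c * (((k : ℝ) + m₀ - 1 / 2)⁻¹ - ((k : ℝ) + m₀ + 1 / 2)⁻¹) :=
        mul_le_mul_of_nonneg_left (inv_sq_le_inv_sub_half_sub_inv_add_half (by linarith [hx k])) hc
    _ = _ := by push_cast; ring_nf

lemma mul_exp_neg_le_inv_of_log_mul_le {a b t : ℝ} (ha : 0 < a) (hb : 0 < b)
    (h : log (a * b) ≤ t) : b * exp (-t) ≤ a⁻¹ := by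
  rw [exp_neg, ← div_eq_mul_inv, div_le_iff₀ (exp_pos t), ← div_eq_inv_mul, le_div_iff₀ ha,
    mul_comm]
  exact (log_le_iff_le_exp (mul_pos ha hb)).mp h

lemma two_mul_le_exp_one_mul_sub_half {x : ℝ} (hx : 2 ≤ x) : 2 * x ≤ exp 1 * (x - 1 / 2) := by
  nlinarith [exp_one_gt_d9]

/-- Let `s ≥ 2` and `m₀ ≥ 2` be integers, let `r : ℕ → ℕ` vanish below `m₀`, and let `ρ`
be a real number with `m·ρ ≥ ln(s²·m²·r(m))` for every `m ≥ 1` with `r(m) ≥ 1`. Then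
`(2s/e)·∑_{m ≥ 1} r(m)·e^{−m·ρ} ≤ 1/(s·m₀)`. -/
theorem stmt_15 (s m₀ : ℕ) (hs : 2 ≤ s) (hm₀ : 2 ≤ m₀)
    (r : ℕ → ℕ) (hr0 : ∀ m, m < m₀ → r m = 0) (ρ : ℝ)
    (hρ : ∀ m : ℕ, 1 ≤ m → 1 ≤ r m →
      Real.log ((s : ℝ) ^ 2 * (m : ℝ) ^ 2 * (r m : ℝ)) ≤ (m : ℝ) * ρ) :
    (2 * (s : ℝ) / Real.exp 1) * ∑' m : ℕ, (r m : ℝ) * Real.exp (-(m : ℝ) * ρ) ≤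
      1 / ((s : ℝ) * (m₀ : ℝ)) := by
  have hs0 : (0 : ℝ) < s := Nat.cast_pos.mpr (by omega)
  have hm₀' : (2 : ℝ) ≤ m₀ := by exact_mod_cast hm₀
  have hterm : ∀ m, m₀ ≤ m →
      (r m : ℝ) * exp (-(m : ℝ) * ρ) ≤ ((s : ℝ) ^ 2)⁻¹ * ((m : ℝ) ^ 2)⁻¹ := by
    intro m hm
    rcases Nat.eq_zero_or_pos (r m) with hr | hr
    · rw [hr, Nat.cast_zero, zero_mul]
      positivity
    have hm0 : (0 : ℝ) < m := Nat.cast_pos.mpr (by omega)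
    rw [← mul_inv, neg_mul]
    exact mul_exp_neg_le_inv_of_log_mul_le (by positivity) (by positivity) (hρ m (by omega) hr)
  have hsum : ∑' m : ℕ, (r m : ℝ) * exp (-(m : ℝ) * ρ) ≤ ((s : ℝ) ^ 2)⁻¹ * ((m₀ : ℝ) - 1 / 2)⁻¹ :=
    tsum_le_mul_inv_sub_half (by positivity) (by omega) (fun m => by positivity)
      (fun m hm => by simp [hr0 m hm]) hterm
  calc 2 * (s : ℝ) / exp 1 * ∑' m : ℕ, (r m : ℝ) * exp (-(m : ℝ) * ρ)
      ≤ 2 * s / exp 1 * (((s : ℝ) ^ 2)⁻¹ * ((m₀ : ℝ) - 1 / 2)⁻¹) := by gcongr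
    _ = 2 / (exp 1 * s * ((m₀ : ℝ) - 1 / 2)) := by field_simp
    _ ≤ 1 / (s * m₀) := by
        rw [div_le_div_iff₀ (mul_pos (by positivity) (by linarith)) (by positivity)]
        nlinarith [two_mul_le_exp_one_mul_sub_half hm₀']
end
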